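/- arXiv:1803.06601 — 2 statements merged into one kernel-verified Lean document; each statement's English description precedes it below -/
import Mathlib

section
/- Fix d ≥ 1, a Schwartz function ξ : ℝ → ℂᵈ, a norm ‖·‖ on ℝ², reals 0 < ð₋ < ð₊, and a continuous function r : {ð ∈ ℝ : ð₋ ≤ |ð| ≤ ð₊} → ℝ \ {0}; form ω_{x,y,t,ð} using the dilation parameter r(ð). Then there exists M > 0 such that for all (x,y) ∈ ℝ² with ‖(x,y)‖ = 1, all ð with ð₋ ≤ |ð| ≤ ð₊, all t ∈ [0,1] and all s ∈ ℝ, one has ‖ω_{x,y,t,ð}(s)‖_{ℂᵈ} ≤ M/(1 + s²). -/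
/-!
For `t > 0` write `ω = (2πðt)⁻¹ ((e^{iπθ} - 1) ξ_r(s + h) + (ξ_r(s + h) - ξ_r(s)))` with
`h = ðty`. Since `|e^{iπθ} - 1| ≤ π|θ|` and `|θ| ≤ t (t|ð||x||y| + 2|x||s|)`, and the mean value
theorem bounds the difference by `|r h|` times `‖ξ'‖` on the segment, both terms absorb the factor
`1/t`; at `t = 0` the same bound holds directly. The parameters range over compact sets (the unit
sphere of the norm, the annulus of `ð`, `[0, 1]`), so `|x|, |y|, |r|, |r|⁻¹` and `|h|` are bounded.
Peetre's inequality `1 + |s| ≤ (1 + H)(1 + |s + h|)` for `|h| ≤ H` then transports the cubic decay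
of `ξ` and `ξ'` through the shift and the dilation, and `(1 + |s|) / (1 + |s|)³ ≤ 1 / (1 + s²)`.
-/

/-- The difference quotient `ω_{x,y,t,ð}(s)` for `t ≠ 0`, extended at `t = 0` by its limit
value `ω_{x,y,0,ð}(s) = (i·x·s/ð)·ξ(r·s) + (y·r/(2π))·ξ'(r·s)`. -/
noncomputable def omegaFn (d : ℕ) (ξ : ℝ → EuclideanSpace ℂ (Fin d)) (r dh x y t s : ℝ) :
    EuclideanSpace ℂ (Fin d) :=
  if t = 0 then
    (Complex.I * (x : ℂ) * (s : ℂ) / (dh : ℂ)) • ξ (r * s) +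
      (y * r / (2 * Real.pi)) • deriv ξ (r * s)
  else
    (((2 * Real.pi * dh * t : ℝ) : ℂ))⁻¹ •
      (Complex.exp (Real.pi * Complex.I * ((t ^ 2 * dh * x * y + 2 * t * x * s : ℝ) : ℂ)) •
          ξ (r * (s + dh * t * y)) - ξ (r * s))

open Set Real

lemma one_add_abs_le_mul_one_add_abs_add {s h H : ℝ} (hh : |h| ≤ H) :
    1 + |s| ≤ (1 + H) * (1 + |s + h|) := by
  have hs : |s| ≤ |s + h| + |h| := by simpa using abs_sub_le (s + h) 0 h |>.trans_eq (by simp)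
  nlinarith [abs_nonneg h, abs_nonneg (s + h)]

lemma mul_one_add_abs_le_mul_one_add_abs_mul_add {c ρ s h H : ℝ} (hc : 0 ≤ c) (hc1 : c ≤ 1)
    (hcρ : c ≤ |ρ|) (hh : |h| ≤ H) :
    c * (1 + |s|) ≤ (1 + H) * (1 + |ρ * (s + h)|) := by
  have hH : 0 ≤ 1 + H := by linarith [abs_nonneg h]
  calc c * (1 + |s|) ≤ c * ((1 + H) * (1 + |s + h|)) :=
        mul_le_mul_of_nonneg_left (one_add_abs_le_mul_one_add_abs_add hh) hc
    _ = (1 + H) * (c + c * |s + h|) := by ring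
    _ ≤ (1 + H) * (1 + |ρ * (s + h)|) := by
        rw [abs_mul]; gcongr

lemma norm_apply_mul_add_le_of_decay {E : Type*} [SeminormedAddCommGroup E] {g : ℝ → E} {k : ℕ}
    {C c ρ s h H : ℝ} (hg : ∀ u, (1 + |u|) ^ k * ‖g u‖ ≤ C) (hc : 0 < c) (hc1 : c ≤ 1)
    (hcρ : c ≤ |ρ|) (hh : |h| ≤ H) :
    ‖g (ρ * (s + h))‖ ≤ ((1 + H) / c) ^ k * C / (1 + |s|) ^ k := by
  rw [le_div_iff₀ (by positivity), div_pow, div_mul_eq_mul_div, le_div_iff₀ (by positivity)]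
  have hH : 0 ≤ 1 + H := by linarith [abs_nonneg h]
  calc ‖g (ρ * (s + h))‖ * (1 + |s|) ^ k * c ^ k
      = (c * (1 + |s|)) ^ k * ‖g (ρ * (s + h))‖ := by rw [mul_pow]; ring
    _ ≤ ((1 + H) * (1 + |ρ * (s + h)|)) ^ k * ‖g (ρ * (s + h))‖ := by
        gcongr ?_ ^ k * _
        exact mul_one_add_abs_le_mul_one_add_abs_mul_add hc.le hc1 hcρ hh
    _ = (1 + H) ^ k * ((1 + |ρ * (s + h)|) ^ k * ‖g (ρ * (s + h))‖) := by rw [mul_pow]; ring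
    _ ≤ (1 + H) ^ k * C := by gcongr; exact hg _

lemma div_one_add_abs_pow_three_le {a b s : ℝ} (ha : 0 ≤ a) (hb : 0 ≤ b) :
    (a + b * |s|) / (1 + |s|) ^ 3 ≤ (a + b) / (1 + s ^ 2) := by
  rw [div_le_div_iff₀ (by positivity) (by positivity)]
  have h1 : a + b * |s| ≤ (a + b) * (1 + |s|) := by nlinarith [abs_nonneg s]
  have h2 : (1 + |s|) * (1 + s ^ 2) ≤ (1 + |s|) ^ 3 := by nlinarith [abs_nonneg s, sq_abs s]
  calc (a + b * |s|) * (1 + s ^ 2) ≤ (a + b) * ((1 + |s|) * (1 + s ^ 2)) := by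
        nlinarith [sq_nonneg s]
    _ ≤ (a + b) * (1 + |s|) ^ 3 := by gcongr

lemma isCompact_setOf_le_abs_and_abs_le (a b : ℝ) : IsCompact {x : ℝ | a ≤ |x| ∧ |x| ≤ b} :=
  (isCompact_Icc (a := -b) (b := b)).of_isClosed_subset
    ((isClosed_le continuous_const continuous_abs).inter
      (isClosed_le continuous_abs continuous_const))
    fun _ hx => abs_le.1 hx.2

theorem Seminorm.exists_norm_le_mul_of_finiteDimensional {E : Type*} [NormedAddCommGroup E]
    [NormedSpace ℝ E] [FiniteDimensional ℝ E] (p : Seminorm ℝ E) (hp : ∀ x, p x = 0 → x = 0) :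
    ∃ C, ∀ x, ‖x‖ ≤ C * p x := by
  obtain ⟨m, hm, hmp⟩ := (isCompact_sphere (0 : E) 1).exists_forall_le'
    p.convexOn.locallyLipschitz.continuous.continuousOn
    (fun x hx => (apply_nonneg p x).lt_of_ne fun h => by simp [hp x h.symm] at hx)
  refine ⟨m⁻¹, fun x => ?_⟩
  rcases eq_or_ne x 0 with rfl | hx
  · simp
  have hx' : 0 < ‖x‖ := norm_pos_iff.2 hx
  have := hmp (‖x‖⁻¹ • x) (by simp [norm_smul, hx'.ne'])
  rw [map_smul_eq_mul, norm_inv, norm_norm] at this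
  rw [inv_mul_eq_div, le_div_iff₀ hm]
  rwa [le_inv_mul_iff₀ hx'] at this

theorem SchwartzMap.exists_one_add_abs_pow_mul_norm_le {E : Type*} [NormedAddCommGroup E]
    [NormedSpace ℝ E] (f : SchwartzMap ℝ E) (k : ℕ) :
    ∃ C, ∀ u : ℝ, (1 + |u|) ^ k * ‖f u‖ ≤ C :=
  ⟨_, fun u => by
    simpa using f.one_add_le_sup_seminorm_apply (𝕜 := ℝ) (m := (k, 0)) le_rfl le_rfl u⟩

lemma norm_comp_mul_sub_le {E : Type*} [NormedAddCommGroup E] [NormedSpace ℝ E] {f : ℝ → E}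
    (hf : Differentiable ℝ f) {r a b D : ℝ} (hD : ∀ σ ∈ uIcc a b, ‖deriv f (r * σ)‖ ≤ D) :
    ‖f (r * b) - f (r * a)‖ ≤ |r| * D * |b - a| := by
  refine (convex_uIcc a b).norm_image_sub_le_of_norm_hasDerivWithin_le
    (f := fun σ => f (r * σ)) (f' := fun σ => r • deriv f (r * σ)) (fun σ _ => ?_) (fun σ hσ => ?_)
    left_mem_uIcc right_mem_uIcc
  · exact ((hf _).hasDerivAt.scomp σ ((hasDerivAt_id σ).const_mul r)).hasDerivWithinAt
      |>.congr_deriv (by simp)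
  · rw [norm_smul, Real.norm_eq_abs]
    exact mul_le_mul_of_nonneg_left (hD σ hσ) (abs_nonneg r)

lemma norm_exp_pi_mul_I_mul_sub_one_le (θ : ℝ) :
    ‖Complex.exp (π * Complex.I * θ) - 1‖ ≤ π * |θ| := by
  have := Real.norm_exp_I_mul_ofReal_sub_one_le (x := π * θ)
  rw [Real.norm_eq_abs, abs_mul, abs_of_pos pi_pos] at this
  convert this using 4
  push_cast; ring

lemma norm_omegaFn_le {d : ℕ} {ξ : ℝ → EuclideanSpace ℂ (Fin d)} (hξ : Differentiable ℝ ξ)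
    {r dh x y t s D : ℝ} (hdh : dh ≠ 0) (ht : 0 ≤ t)
    (hD : ∀ σ ∈ uIcc s (s + dh * t * y), ‖deriv ξ (r * σ)‖ ≤ D) :
    ‖omegaFn d ξ r dh x y t s‖ ≤
      |x| * (t * |y| / 2 + |s| / |dh|) * ‖ξ (r * (s + dh * t * y))‖ + |r| * |y| / (2 * π) * D := by
  unfold omegaFn
  split_ifs with ht0
  · subst ht0
    have hD0 : ‖deriv ξ (r * s)‖ ≤ D := hD s (by simp)
    refine (norm_add_le _ _).trans ?_
    simp only [norm_smul, norm_div, norm_mul, Complex.norm_I, Complex.norm_real, Real.norm_eq_abs,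
      abs_two, abs_of_pos pi_pos, mul_zero, zero_mul, add_zero, zero_div, zero_add, one_mul]
    rw [mul_comm |y|]
    gcongr
    exact le_of_eq (by ring)
  · have ht' : 0 < t := ht.lt_of_ne' ht0
    set h := dh * t * y
    set θ := t ^ 2 * dh * x * y + 2 * t * x * s
    set e := Complex.exp (π * Complex.I * θ)
    have hθ : |θ| ≤ t * (t * |dh| * |x| * |y| + 2 * |x| * |s|) := by
      refine (abs_add_le _ _).trans (le_of_eq ?_)
      simp only [abs_mul, abs_pow, abs_of_pos ht', abs_two]; ring
    have hdiff : ‖ξ (r * (s + h)) - ξ (r * s)‖ ≤ |r| * D * |h| := by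
      simpa using norm_comp_mul_sub_le hξ hD
    have hsplit : e • ξ (r * (s + h)) - ξ (r * s)
        = (e - 1) • ξ (r * (s + h)) + (ξ (r * (s + h)) - ξ (r * s)) := by
      rw [sub_smul, one_smul]; abel
    have hc : ‖(((2 * π * dh * t : ℝ) : ℂ))⁻¹‖ = (2 * π * |dh| * t)⁻¹ := by
      simp [abs_of_pos ht', abs_of_pos pi_pos]
    rw [norm_smul, hc, hsplit, inv_mul_le_iff₀ (by positivity)]
    calc ‖(e - 1) • ξ (r * (s + h)) + (ξ (r * (s + h)) - ξ (r * s))‖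
        ≤ π * |θ| * ‖ξ (r * (s + h))‖ + |r| * D * |h| := by
          refine (norm_add_le _ _).trans (add_le_add ?_ hdiff)
          rw [norm_smul]
          gcongr
          exact norm_exp_pi_mul_I_mul_sub_one_le θ
      _ ≤ π * (t * (t * |dh| * |x| * |y| + 2 * |x| * |s|)) * ‖ξ (r * (s + h))‖ + |r| * D * |h| := by
          gcongr
      _ = 2 * π * |dh| * t * (|x| * (t * |y| / 2 + |s| / |dh|) * ‖ξ (r * (s + h))‖
            + |r| * |y| / (2 * π) * D) := by
          simp only [h, abs_mul, abs_of_pos ht']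
          field_simp

lemma norm_omegaFn_le_of_decay {d : ℕ} {ξ : ℝ → EuclideanSpace ℂ (Fin d)} (hξ : Differentiable ℝ ξ)
    {C₀ C₁ c R B H δ r dh x y t s : ℝ} (h₀ : ∀ u, (1 + |u|) ^ 3 * ‖ξ u‖ ≤ C₀)
    (h₁ : ∀ u, (1 + |u|) ^ 3 * ‖deriv ξ u‖ ≤ C₁) (hc : 0 < c) (hc1 : c ≤ 1) (hcr : c ≤ |r|)
    (hrR : |r| ≤ R) (hx : |x| ≤ B) (hy : |y| ≤ B) (hδ : 0 < δ) (hδdh : δ ≤ |dh|)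
    (hH : |dh| * B ≤ H) (ht : t ∈ Icc 0 1) :
    ‖omegaFn d ξ r dh x y t s‖ ≤
      ((1 + H) / c) ^ 3 * (B * (B / 2) * C₀ + R * B / (2 * π) * C₁ + B / δ * C₀) / (1 + s ^ 2) := by
  set A := ((1 + H) / c) ^ 3
  have ht0 : 0 ≤ t := ht.1
  have hB : 0 ≤ B := (abs_nonneg x).trans hx
  have hR : 0 ≤ R := (abs_nonneg r).trans hrR
  have hC₀ : 0 ≤ C₀ := (by positivity : (0 : ℝ) ≤ _).trans (h₀ 0)
  have hC₁ : 0 ≤ C₁ := (by positivity : (0 : ℝ) ≤ _).trans (h₁ 0)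
  have hh : |dh * t * y| ≤ H := by
    rw [abs_mul, abs_mul, abs_of_nonneg ht0]
    calc |dh| * t * |y| ≤ |dh| * 1 * B := by gcongr; exact ht.2
      _ ≤ H := by rwa [mul_one]
  have hA : 0 ≤ A := pow_nonneg (div_nonneg (by linarith [abs_nonneg (dh * t * y)]) hc.le) 3
  have hξ_shift := norm_apply_mul_add_le_of_decay h₀ hc hc1 hcr hh (s := s)
  have hD : ∀ σ ∈ uIcc s (s + dh * t * y), ‖deriv ξ (r * σ)‖ ≤ A * C₁ / (1 + |s|) ^ 3 :=
    fun σ hσ => by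
      simpa using norm_apply_mul_add_le_of_decay h₁ hc hc1 hcr (s := s) (h := σ - s)
        ((abs_sub_left_of_mem_uIcc hσ).trans (by simpa using hh))
  have hdh : dh ≠ 0 := abs_pos.1 (hδ.trans_le hδdh)
  calc ‖omegaFn d ξ r dh x y t s‖
      ≤ |x| * (t * |y| / 2 + |s| / |dh|) * ‖ξ (r * (s + dh * t * y))‖
          + |r| * |y| / (2 * π) * (A * C₁ / (1 + |s|) ^ 3) := norm_omegaFn_le hξ hdh ht0 hD
    _ ≤ B * (B / 2 + |s| / δ) * (A * C₀ / (1 + |s|) ^ 3)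
          + R * B / (2 * π) * (A * C₁ / (1 + |s|) ^ 3) := by
        gcongr
        exact (mul_le_of_le_one_left (abs_nonneg y) ht.2).trans hy
    _ = (A * (B * (B / 2) * C₀ + R * B / (2 * π) * C₁) + A * (B / δ) * C₀ * |s|)
          / (1 + |s|) ^ 3 := by ring
    _ ≤ (A * (B * (B / 2) * C₀ + R * B / (2 * π) * C₁) + A * (B / δ) * C₀) / (1 + s ^ 2) :=
        div_one_add_abs_pow_three_le (by positivity) (by positivity)
    _ = A * (B * (B / 2) * C₀ + R * B / (2 * π) * C₁ + B / δ * C₀) / (1 + s ^ 2) := by ring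

theorem stmt9_general (d : ℕ) (ξ : SchwartzMap ℝ (EuclideanSpace ℂ (Fin d)))
    (nrm : Seminorm ℝ (ℝ × ℝ)) (hnrm : ∀ p, nrm p = 0 → p = 0)
    (dhm dhp : ℝ) (h0 : 0 < dhm)
    (r : ℝ → ℝ) (hrc : ContinuousOn r {dh : ℝ | dhm ≤ |dh| ∧ |dh| ≤ dhp})
    (hr0 : ∀ dh : ℝ, dhm ≤ |dh| → |dh| ≤ dhp → r dh ≠ 0) :
    ∃ M > 0, ∀ x y dh t s : ℝ, nrm (x, y) = 1 → dhm ≤ |dh| → |dh| ≤ dhp →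
      t ∈ Set.Icc (0 : ℝ) 1 →
      ‖omegaFn d (⇑ξ) (r dh) dh x y t s‖ ≤ M / (1 + s ^ 2) := by
  obtain ⟨B, hB⟩ := nrm.exists_norm_le_mul_of_finiteDimensional hnrm
  have hK := isCompact_setOf_le_abs_and_abs_le dhm dhp
  obtain ⟨c, hc, hcr⟩ := hK.exists_forall_le' hrc.abs fun dh hdh => abs_pos.2 (hr0 dh hdh.1 hdh.2)
  obtain ⟨R, hR⟩ := hK.exists_bound_of_continuousOn hrc
  obtain ⟨C₀, h₀⟩ := ξ.exists_one_add_abs_pow_mul_norm_le 3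
  obtain ⟨C₁, h₁⟩ := (SchwartzMap.derivCLM ℝ _ ξ).exists_one_add_abs_pow_mul_norm_le 3
  simp only [SchwartzMap.derivCLM_apply] at h₁
  refine ⟨max (((1 + dhp * B) / min c 1) ^ 3 *
    (B * (B / 2) * C₀ + R * B / (2 * π) * C₁ + B / dhm * C₀)) 1, by positivity,
    fun x y dh t s hxy hm hp ht => ?_⟩
  have hxy' : ‖(x, y)‖ ≤ B := by simpa [hxy] using hB (x, y)
  refine (norm_omegaFn_le_of_decay ξ.differentiable h₀ h₁ (lt_min hc one_pos) (min_le_right _ _)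
    ((min_le_left _ _).trans (hcr dh ⟨hm, hp⟩)) (by simpa using hR dh ⟨hm, hp⟩)
    (by simpa using (norm_fst_le (x, y)).trans hxy')
    (by simpa using (norm_snd_le (x, y)).trans hxy')
    h0 hm (mul_le_mul_of_nonneg_right hp ((norm_nonneg _).trans hxy')) ht).trans ?_
  gcongr
  exact le_max_left _ _

/-- For a Schwartz function ξ, a norm on ℝ², reals 0 < ð₋ < ð₊ and a continuous nonvanishing
dilation parameter `r` on `{ð : ð₋ ≤ |ð| ≤ ð₊}`, there is M > 0 such that for all (x,y) of
norm 1, all ð with ð₋ ≤ |ð| ≤ ð₊, all t ∈ [0,1] and all s ∈ ℝ,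
`‖ω_{x,y,t,ð}(s)‖ ≤ M/(1 + s²)`. -/
theorem stmt9 (d : ℕ) (hd : 1 ≤ d) (ξ : SchwartzMap ℝ (EuclideanSpace ℂ (Fin d)))
    (nrm : Seminorm ℝ (ℝ × ℝ)) (hnrm : ∀ p, nrm p = 0 → p = 0)
    (dhm dhp : ℝ) (h0 : 0 < dhm) (hmp : dhm < dhp)
    (r : ℝ → ℝ) (hrc : ContinuousOn r {dh : ℝ | dhm ≤ |dh| ∧ |dh| ≤ dhp})
    (hr0 : ∀ dh : ℝ, dhm ≤ |dh| → |dh| ≤ dhp → r dh ≠ 0) :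
    ∃ M > 0, ∀ x y dh t s : ℝ, nrm (x, y) = 1 → dhm ≤ |dh| → |dh| ≤ dhp →
      t ∈ Set.Icc (0 : ℝ) 1 →
      ‖omegaFn d (⇑ξ) (r dh) dh x y t s‖ ≤ M / (1 + s ^ 2) :=
  stmt9_general d ξ nrm hnrm dhm dhp h0 r hrc hr0
end

section
/- Fix d ≥ 1, a Schwartz function ξ : ℝ → ℂᵈ, a norm ‖·‖ on ℝ², reals 0 < ð₋ < ð₊, and a continuous function r : {ð ∈ ℝ : ð₋ ≤ |ð| ≤ ð₊} → ℝ \ {0}; form ω_{x,y,t,ð} using the dilation parameter r(ð). Then the map (x, y, t, ð, s) ↦ ω_{x,y,t,ð}(s) is jointly continuous on the set {(x,y,t,ð) : ‖(x,y)‖ = 1, t ∈ [0,1], ð₋ ≤ |ð| ≤ ð₊} × ℝ (with the value at t = 0 given by ω_{x,y,0,ð}(s)). -/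
open Complex Real

section DifferenceQuotient

variable {E : Type*} [NormedAddCommGroup E] [NormedSpace ℝ E] [CompleteSpace E]

theorem dslope_zero_eq_intervalIntegral {f f' : ℝ → E} (hf : ∀ τ, HasDerivAt f (f' τ) τ)
    (hf' : Continuous f') (t : ℝ) : dslope f 0 t = ∫ σ in (0 : ℝ)..1, f' (σ * t) := by
  rcases eq_or_ne t 0 with rfl | ht
  · simp [dslope_same, (hf 0).deriv]
  · rw [dslope_of_ne _ ht, slope_def_module, intervalIntegral.integral_comp_mul_right _ ht,
      intervalIntegral.integral_eq_sub_of_hasDerivAt (fun τ _ => hf τ) (hf'.intervalIntegrable _ _)]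
    simp

theorem continuous_dslope_zero {P : Type*} [TopologicalSpace P] {g g' : P → ℝ → E}
    (hg : ∀ p τ, HasDerivAt (g p) (g' p τ) τ) (hg' : Continuous (Function.uncurry g')) :
    Continuous fun q : P × ℝ => dslope (g q.1) 0 q.2 := by
  simp_rw [fun q : P × ℝ => dslope_zero_eq_intervalIntegral (hg q.1) (hg'.uncurry_left q.1) q.2]
  exact intervalIntegral.continuous_parametric_intervalIntegral_of_continuous'
    (μ := MeasureTheory.volume) (f := fun (q : P × ℝ) σ => g' q.1 (σ * q.2))
    (hg'.comp (f := fun p : (P × ℝ) × ℝ => (p.1.1, p.2 * p.1.2)) (by fun_prop)) 0 1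

end DifferenceQuotient

section OmegaCurve

variable {F : Type*} [NormedAddCommGroup F] [NormedSpace ℂ F] {ξ : ℝ → F}

noncomputable def omegaPhase (x y dh s τ : ℝ) : ℂ :=
  exp (π * I * ((τ ^ 2 * dh * x * y + 2 * τ * x * s : ℝ) : ℂ))

noncomputable def omegaCurve (ξ : ℝ → F) (x y dh s R τ : ℝ) : F :=
  omegaPhase x y dh s τ • ξ (R * (s + dh * τ * y))

noncomputable def omegaCurveDeriv (ξ : ℝ → F) (x y dh s R τ : ℝ) : F :=
  omegaPhase x y dh s τ • (R * dh * y) • deriv ξ (R * (s + dh * τ * y)) +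
    (π * I * ((2 * τ * dh * x * y + 2 * x * s : ℝ) : ℂ) * omegaPhase x y dh s τ) •
      ξ (R * (s + dh * τ * y))

@[simp]
theorem omegaPhase_zero (x y dh s : ℝ) : omegaPhase x y dh s 0 = 1 := by
  simp [omegaPhase]

theorem omegaCurve_zero (x y dh s R : ℝ) : omegaCurve ξ x y dh s R 0 = ξ (R * s) := by
  simp [omegaCurve]

theorem hasDerivAt_omegaCurve (hξ : Differentiable ℝ ξ) (x y dh s R τ : ℝ) :
    HasDerivAt (omegaCurve ξ x y dh s R) (omegaCurveDeriv ξ x y dh s R τ) τ := by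
  have hphase : HasDerivAt (omegaPhase x y dh s)
      (π * I * ((2 * τ * dh * x * y + 2 * x * s : ℝ) : ℂ) * omegaPhase x y dh s τ) τ := by
    have h := ((hasDerivAt_pow 2 τ |>.mul_const (dh * x * y)).fun_add
      ((hasDerivAt_id' τ).const_mul 2 |>.mul_const (x * s))).ofReal_comp.const_mul (π * I) |>.cexp
    convert h using 1
    · funext τ
      unfold omegaPhase
      ring_nf
    · unfold omegaPhase
      push_cast
      ring_nf
  have harg : HasDerivAt (fun τ => R * (s + dh * τ * y)) (R * dh * y) τ := by
    simpa [mul_assoc] using (((hasDerivAt_id τ).const_mul dh).mul_const y).const_add s |>.const_mul R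
  exact hphase.smul ((hξ _).hasDerivAt.scomp τ harg)

theorem continuous_omegaCurveDeriv (hξ : ContDiff ℝ 1 ξ) :
    Continuous fun q : (ℝ × ℝ × ℝ × ℝ × ℝ) × ℝ =>
      omegaCurveDeriv ξ q.1.1 q.1.2.1 q.1.2.2.1 q.1.2.2.2.1 q.1.2.2.2.2 q.2 := by
  have := hξ.continuous
  have := hξ.continuous_deriv le_rfl
  unfold omegaCurveDeriv omegaPhase
  fun_prop

theorem continuous_dslope_omegaCurve [CompleteSpace F] (hξ : ContDiff ℝ 1 ξ) :
    Continuous fun q : (ℝ × ℝ × ℝ × ℝ × ℝ) × ℝ =>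
      dslope (omegaCurve ξ q.1.1 q.1.2.1 q.1.2.2.1 q.1.2.2.2.1 q.1.2.2.2.2) 0 q.2 := by
  refine continuous_dslope_zero (E := F) (P := ℝ × ℝ × ℝ × ℝ × ℝ)
    (g := fun q => omegaCurve ξ q.1 q.2.1 q.2.2.1 q.2.2.2.1 q.2.2.2.2)
    (g' := fun q => omegaCurveDeriv ξ q.1 q.2.1 q.2.2.1 q.2.2.2.1 q.2.2.2.2) ?_ ?_
  · exact fun q => hasDerivAt_omegaCurve (hξ.differentiable one_ne_zero) _ _ _ _ _
  · exact continuous_omegaCurveDeriv hξ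

end OmegaCurve

theorem omegaFn_eq_smul_dslope {d : ℕ} {ξ : ℝ → EuclideanSpace ℂ (Fin d)}
    (hξ : Differentiable ℝ ξ) {R dh : ℝ} (hdh : dh ≠ 0) (x y t s : ℝ) :
    omegaFn d ξ R dh x y t s = (2 * π * dh)⁻¹ • dslope (omegaCurve ξ x y dh s R) 0 t := by
  unfold omegaFn
  split_ifs with ht
  · subst ht
    have hdhC : (dh : ℂ) ≠ 0 := ofReal_ne_zero.mpr hdh
    rw [dslope_same, (hasDerivAt_omegaCurve hξ x y dh s R 0).deriv]
    simp only [omegaCurveDeriv, omegaPhase_zero, mul_zero, zero_mul, add_zero, zero_add,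
      ← Complex.coe_smul, smul_smul, smul_add]
    rw [add_comm]
    congr 1 <;> congr 1 <;> push_cast <;> field_simp
  · rw [dslope_of_ne _ ht, slope_def_module, omegaCurve_zero, sub_zero, ← Complex.coe_smul,
      ← Complex.coe_smul, smul_smul]
    congr 1
    push_cast
    field_simp

theorem stmt10_general (d : ℕ) (ξ : SchwartzMap ℝ (EuclideanSpace ℂ (Fin d)))
    (nrm : Seminorm ℝ (ℝ × ℝ))
    (dhm dhp : ℝ) (h0 : 0 < dhm)
    (r : ℝ → ℝ) (hrc : ContinuousOn r {dh : ℝ | dhm ≤ |dh| ∧ |dh| ≤ dhp}) :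
    ContinuousOn
      (fun p : ℝ × ℝ × ℝ × ℝ × ℝ =>
        omegaFn d (⇑ξ) (r p.2.2.2.1) p.2.2.2.1 p.1 p.2.1 p.2.2.1 p.2.2.2.2)
      {p : ℝ × ℝ × ℝ × ℝ × ℝ | nrm (p.1, p.2.1) = 1 ∧ p.2.2.1 ∈ Set.Icc (0 : ℝ) 1 ∧
        dhm ≤ |p.2.2.2.1| ∧ |p.2.2.2.1| ≤ dhp} := by
  set S := {p : ℝ × ℝ × ℝ × ℝ × ℝ | nrm (p.1, p.2.1) = 1 ∧ p.2.2.1 ∈ Set.Icc (0 : ℝ) 1 ∧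
    dhm ≤ |p.2.2.2.1| ∧ |p.2.2.2.1| ≤ dhp}
  have hξ : ContDiff ℝ 1 ξ := ξ.smooth 1
  have hdh : ∀ p ∈ S, p.2.2.2.1 ≠ 0 := fun p hp => abs_pos.mp (h0.trans_le hp.2.2.1)
  -- `p = (x, y, t, ð, s)` is sent to `((x, y, ð, s, r ð), t)`
  have hslope := (continuous_dslope_omegaCurve hξ).comp_continuousOn (s := S)
    (f := fun p : ℝ × ℝ × ℝ × ℝ × ℝ => ((p.1, p.2.1, p.2.2.2.1, p.2.2.2.2, r p.2.2.2.1), p.2.2.1))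
    (by fun_prop (disch := exact fun p hp => hp.2.2))
  have hscale : ContinuousOn (fun p : ℝ × ℝ × ℝ × ℝ × ℝ => (2 * π * p.2.2.2.1)⁻¹) S :=
    ContinuousOn.inv₀ (by fun_prop) fun p hp => mul_ne_zero (by positivity) (hdh p hp)
  exact (hscale.smul hslope).congr fun p hp =>
    omegaFn_eq_smul_dslope (hξ.differentiable one_ne_zero) (hdh p hp) _ _ _ _

/-- For a Schwartz function ξ, a norm on ℝ², reals 0 < ð₋ < ð₊ and a continuous nonvanishing
dilation parameter `r` on `{ð : ð₋ ≤ |ð| ≤ ð₊}`, the map `(x, y, t, ð, s) ↦ ω_{x,y,t,ð}(s)`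
is jointly continuous on `{(x,y,t,ð) : ‖(x,y)‖ = 1, t ∈ [0,1], ð₋ ≤ |ð| ≤ ð₊} × ℝ`. -/
theorem stmt10 (d : ℕ) (hd : 1 ≤ d) (ξ : SchwartzMap ℝ (EuclideanSpace ℂ (Fin d)))
    (nrm : Seminorm ℝ (ℝ × ℝ)) (hnrm : ∀ p, nrm p = 0 → p = 0)
    (dhm dhp : ℝ) (h0 : 0 < dhm) (hmp : dhm < dhp)
    (r : ℝ → ℝ) (hrc : ContinuousOn r {dh : ℝ | dhm ≤ |dh| ∧ |dh| ≤ dhp})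
    (hr0 : ∀ dh : ℝ, dhm ≤ |dh| → |dh| ≤ dhp → r dh ≠ 0) :
    ContinuousOn
      (fun p : ℝ × ℝ × ℝ × ℝ × ℝ =>
        omegaFn d (⇑ξ) (r p.2.2.2.1) p.2.2.2.1 p.1 p.2.1 p.2.2.1 p.2.2.2.2)
      {p : ℝ × ℝ × ℝ × ℝ × ℝ | nrm (p.1, p.2.1) = 1 ∧ p.2.2.1 ∈ Set.Icc (0 : ℝ) 1 ∧
        dhm ≤ |p.2.2.2.1| ∧ |p.2.2.2.1| ≤ dhp} :=
  stmt10_general d ξ nrm dhm dhp h0 r hrc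
end
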